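/- arXiv:2103.04157 — 3 statements merged into one kernel-verified Lean document; each statement's English description precedes it below -/
import Mathlib

section
/- The ℤ-linear maps φ, ψ: L → L determined by φ: u ↦ u, v ↦ v+y, x ↦ x−u, y ↦ y (identity on z, t and the two ℤ⁸ factors) and ψ: u ↦ u, v ↦ v+t, z ↦ z−u, t ↦ t (identity on x, y and the two ℤ⁸ factors) are isometries of (L,Q); moreover their ℝ-linear extensions satisfy φ(f_i(s,r)) = f_i(s+1,r) and ψ(f_i(s,r)) = f_i(s,r+1) for i = 1,2,3 and all (s,r) ∈ ℝ². -/
/-! `φ` and `ψ` move only the `ℤ⁶ = U ⊕ U ⊕ U` coordinates and fix both `E8` summands, so each is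
an isometry of `Q` as soon as it preserves the form of `U ⊕ U ⊕ U`, which is a polynomial identity
in the six coordinates. The translation identities for `fᵢ` are read off coordinatewise. -/

open scoped BigOperators

/-- The Cartan matrix of E8 (Bourbaki numbering, 0-indexed): diagonal entries 2,
entry -1 exactly for the edges of the E8 Dynkin diagram. -/
def E8Cartan : Matrix (Fin 8) (Fin 8) ℤ :=
  !![ 2,  0, -1,  0,  0,  0,  0,  0;
      0,  2,  0, -1,  0,  0,  0,  0;
     -1,  0,  2, -1,  0,  0,  0,  0;
      0, -1, -1,  2, -1,  0,  0,  0;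
      0,  0,  0, -1,  2, -1,  0,  0;
      0,  0,  0,  0, -1,  2, -1,  0;
      0,  0,  0,  0,  0, -1,  2, -1;
      0,  0,  0,  0,  0,  0, -1,  2]

/-- Integer value `dᵀ C d'` of the E8 Cartan pairing. -/
def pairCZ (d d' : Fin 8 → ℤ) : ℤ := ∑ i, ∑ j, d i * E8Cartan i j * d' j

/-- Real value `wᵀ C w'` of the (real extension of the) E8 Cartan pairing. -/
def pairCR (w w' : Fin 8 → ℝ) : ℝ := ∑ i, ∑ j, w i * (E8Cartan i j : ℝ) * w' j

/-- The `−E8` pairing, real coefficients. -/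
def innE8R (w w' : Fin 8 → ℝ) : ℝ := -pairCR w w'

/-- The `−E8` pairing, integer coefficients. -/
def innE8Z (d d' : Fin 8 → ℤ) : ℤ := -pairCZ d d'

/-- The K3 lattice `L = ℤ⁶ ⊕ ℤ⁸ ⊕ ℤ⁸`. -/
abbrev LZ := (Fin 6 → ℤ) × (Fin 8 → ℤ) × (Fin 8 → ℤ)

/-- `L_ℝ = ℝ⁶ ⊕ ℝ⁸ ⊕ ℝ⁸`. -/
abbrev LR := (Fin 6 → ℝ) × (Fin 8 → ℝ) × (Fin 8 → ℝ)

/-- The K3 bilinear form `Q` (integer version).  Coordinates `0,…,5` of the first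
factor are `u, v, x, y, z, t`; one has `Q(u,v) = Q(x,y) = Q(z,t) = 1`, all other
pairings among `u,…,t` vanish, each `ℤ⁸` factor carries `−C`, and the three
factors are mutually orthogonal. -/
def QZ (d d' : LZ) : ℤ :=
  (d.1 0 * d'.1 1 + d.1 1 * d'.1 0 + d.1 2 * d'.1 3 + d.1 3 * d'.1 2
    + d.1 4 * d'.1 5 + d.1 5 * d'.1 4)
  - pairCZ d.2.1 d'.2.1 - pairCZ d.2.2 d'.2.2

/-- The K3 bilinear form `Q`, extended `ℝ`-bilinearly to `L_ℝ`. -/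
def QR (w w' : LR) : ℝ :=
  (w.1 0 * w'.1 1 + w.1 1 * w'.1 0 + w.1 2 * w'.1 3 + w.1 3 * w'.1 2
    + w.1 4 * w'.1 5 + w.1 5 * w'.1 4)
  - pairCR w.2.1 w'.2.1 - pairCR w.2.2 w'.2.2

/-- The inclusion `L → L_ℝ`. -/
def incl (d : LZ) : LR :=
  (fun i => (d.1 i : ℝ), fun i => (d.2.1 i : ℝ), fun i => (d.2.2 i : ℝ))

/-- The family of 45 real numbers `1`, `eᵢ` (`1 ≤ i ≤ 8`) and `eᵢ·eⱼ` (`1 ≤ i ≤ j ≤ 8`). -/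
def fam45 (e : Fin 8 → ℝ) : Option (Fin 8 ⊕ {p : Fin 8 × Fin 8 // p.1 ≤ p.2}) → ℝ
  | none => 1
  | some (Sum.inl i) => e i
  | some (Sum.inr p) => e p.1.1 * e p.1.2

/-- `φ` on the `ℤ⁶`/`ℝ⁶` factor: `u ↦ u`, `v ↦ v + y`, `x ↦ x − u`, `y ↦ y`,
`z ↦ z`, `t ↦ t` (in coordinates). -/
def phi6 {R : Type*} [Ring R] (w : Fin 6 → R) : Fin 6 → R :=
  ![w 0 - w 2, w 1, w 2, w 1 + w 3, w 4, w 5]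

/-- `φ : L → L`, identity on the two `ℤ⁸` factors. -/
def phiZ (d : LZ) : LZ := (phi6 d.1, d.2.1, d.2.2)

/-- The `ℝ`-linear extension of `φ`. -/
def phiR (w : LR) : LR := (phi6 w.1, w.2.1, w.2.2)

/-- `ψ` on the `ℤ⁶`/`ℝ⁶` factor: `u ↦ u`, `v ↦ v + t`, `x ↦ x`, `y ↦ y`,
`z ↦ z − u`, `t ↦ t` (in coordinates). -/
def psi6 {R : Type*} [Ring R] (w : Fin 6 → R) : Fin 6 → R :=
  ![w 0 - w 4, w 1, w 2, w 3, w 4, w 1 + w 5]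

/-- `ψ : L → L`, identity on the two `ℤ⁸` factors. -/
def psiZ (d : LZ) : LZ := (psi6 d.1, d.2.1, d.2.2)

/-- The `ℝ`-linear extension of `ψ`. -/
def psiR (w : LR) : LR := (psi6 w.1, w.2.1, w.2.2)

/-- `f₁(s,r) = 2u + v + s·y + r·t`. -/
def f1 (s r : ℝ) : LR := (![2, 1, 0, s, 0, r], 0, 0)

/-- `f₂(s,r) = x − s·u + 2y + a`, where `a = (0, e)`. -/
def f2 (e : Fin 8 → ℝ) (s r : ℝ) : LR := (![-s, 0, 1, 2, 0, 0], 0, e)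

/-- `f₃(s,r) = z − r·u + 2t + b`, where `b = (e, 0)`. -/
def f3 (e : Fin 8 → ℝ) (s r : ℝ) : LR := (![-r, 0, 0, 0, 1, 2], e, 0)

section SixDim

variable {R : Type*} [CommRing R]

def pairU3 (w w' : Fin 6 → R) : R :=
  w 0 * w' 1 + w 1 * w' 0 + w 2 * w' 3 + w 3 * w' 2 + w 4 * w' 5 + w 5 * w' 4

theorem pairU3_phi6 (w w' : Fin 6 → R) : pairU3 (phi6 w) (phi6 w') = pairU3 w w' := by
  simp only [pairU3, phi6, Matrix.cons_val_zero, Matrix.cons_val_one, Matrix.cons_val]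
  ring

theorem pairU3_psi6 (w w' : Fin 6 → R) : pairU3 (psi6 w) (psi6 w') = pairU3 w w' := by
  simp only [pairU3, psi6, Matrix.cons_val_zero, Matrix.cons_val_one, Matrix.cons_val]
  ring

theorem phi6_vecCons (a b c d e f : R) :
    phi6 ![a, b, c, d, e, f] = ![a - c, b, c, b + d, e, f] :=
  rfl

theorem psi6_vecCons (a b c d e f : R) :
    psi6 ![a, b, c, d, e, f] = ![a - e, b, c, d, e, b + f] :=
  rfl

end SixDim

theorem QZ_eq_pairU3 (d d' : LZ) :
    QZ d d' = pairU3 d.1 d'.1 - pairCZ d.2.1 d'.2.1 - pairCZ d.2.2 d'.2.2 :=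
  rfl

theorem QZ_map_fst {g : (Fin 6 → ℤ) → Fin 6 → ℤ}
    (hg : ∀ w w', pairU3 (g w) (g w') = pairU3 w w') (d d' : LZ) :
    QZ (g d.1, d.2) (g d'.1, d'.2) = QZ d d' := by
  rw [QZ_eq_pairU3, QZ_eq_pairU3, hg]

section Translations

variable (e : Fin 8 → ℝ) (s r : ℝ)

theorem phiR_f1 : phiR (f1 s r) = f1 (s + 1) r := by
  simp [phiR, f1, phi6_vecCons, add_comm]

theorem phiR_f2 : phiR (f2 e s r) = f2 e (s + 1) r := by
  simp [phiR, f2, phi6_vecCons, sub_eq_add_neg, add_comm]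

theorem phiR_f3 : phiR (f3 e s r) = f3 e (s + 1) r := by
  simp [phiR, f3, phi6_vecCons]

theorem psiR_f1 : psiR (f1 s r) = f1 s (r + 1) := by
  simp [psiR, f1, psi6_vecCons, add_comm]

theorem psiR_f2 : psiR (f2 e s r) = f2 e s (r + 1) := by
  simp [psiR, f2, psi6_vecCons]

theorem psiR_f3 : psiR (f3 e s r) = f3 e s (r + 1) := by
  simp [psiR, f3, psi6_vecCons, sub_eq_add_neg, add_comm]

end Translations

/-- `φ` and `ψ` are isometries of `(L, Q)` and their `ℝ`-linear extensions satisfy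
`φ(fᵢ(s,r)) = fᵢ(s+1,r)` and `ψ(fᵢ(s,r)) = fᵢ(s,r+1)` for `i = 1, 2, 3`. -/
theorem statement8 (e : Fin 8 → ℝ) :
    (∀ d d' : LZ, QZ (phiZ d) (phiZ d') = QZ d d') ∧
    (∀ d d' : LZ, QZ (psiZ d) (psiZ d') = QZ d d') ∧
    (∀ s r : ℝ,
      (phiR (f1 s r) = f1 (s + 1) r ∧ phiR (f2 e s r) = f2 e (s + 1) r ∧
        phiR (f3 e s r) = f3 e (s + 1) r) ∧
      (psiR (f1 s r) = f1 s (r + 1) ∧ psiR (f2 e s r) = f2 e s (r + 1) ∧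
        psiR (f3 e s r) = f3 e s (r + 1))) :=
  ⟨QZ_map_fst pairU3_phi6, QZ_map_fst pairU3_psi6, fun s r =>
    ⟨⟨phiR_f1 s r, phiR_f2 e s r, phiR_f3 e s r⟩,
      psiR_f1 s r, psiR_f2 e s r, psiR_f3 e s r⟩⟩
end

section
/- Assume |(e,e)| ≤ 1/2, where (e,e) = −eᵀCe. Then for every (s,r) ∈ ℝ²: Q(f₁(s,r),f₁(s,r)) = 4 > 0, Q(f₂(s,r),f₂(s,r)) = 4 + (e,e) > 0, Q(f₃(s,r),f₃(s,r)) = 4 + (e,e) > 0, and Q(f₂(s,r),f₃(s,r)) = Q(f₁(s,r),f₂(s,r)) = Q(f₁(s,r),f₃(s,r)) = 0. -/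
open scoped BigOperators

/-!
The hyperbolic parts of `f₁, f₂, f₃` are pairwise orthogonal and each has norm `4`, while the
`E8` components of `f₂` and `f₃` lie in different, mutually orthogonal summands; so every value
is a direct coordinate computation, and positivity of `4 + (e,e)` follows from `(e,e) ≥ -1/2`.
-/

lemma pairCR_zero_left (w : Fin 8 → ℝ) : pairCR 0 w = 0 := by
  simp [pairCR]

lemma pairCR_zero_right (w : Fin 8 → ℝ) : pairCR w 0 = 0 := by
  simp [pairCR]

lemma QR_f1_self (s r : ℝ) : QR (f1 s r) (f1 s r) = 4 := by
  simp only [QR, f1, Matrix.cons_val, Matrix.cons_val_zero,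
    Matrix.cons_val_one, pairCR_zero_right]
  norm_num

lemma QR_f2_self (e : Fin 8 → ℝ) (s r : ℝ) : QR (f2 e s r) (f2 e s r) = 4 + innE8R e e := by
  simp only [QR, f2, innE8R, Matrix.cons_val, Matrix.cons_val_zero,
    Matrix.cons_val_one, pairCR_zero_right]
  ring

lemma QR_f3_self (e : Fin 8 → ℝ) (s r : ℝ) : QR (f3 e s r) (f3 e s r) = 4 + innE8R e e := by
  simp only [QR, f3, innE8R, Matrix.cons_val, Matrix.cons_val_zero,
    Matrix.cons_val_one, pairCR_zero_right]
  ring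

lemma QR_f2_f3 (e : Fin 8 → ℝ) (s r : ℝ) : QR (f2 e s r) (f3 e s r) = 0 := by
  simp only [QR, f2, f3, Matrix.cons_val, Matrix.cons_val_zero,
    Matrix.cons_val_one, pairCR_zero_left, pairCR_zero_right]
  ring

lemma QR_f1_f2 (e : Fin 8 → ℝ) (s r : ℝ) : QR (f1 s r) (f2 e s r) = 0 := by
  simp only [QR, f1, f2, Matrix.cons_val, Matrix.cons_val_zero,
    Matrix.cons_val_one, pairCR_zero_left, pairCR_zero_right]
  ring

lemma QR_f1_f3 (e : Fin 8 → ℝ) (s r : ℝ) : QR (f1 s r) (f3 e s r) = 0 := by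
  simp only [QR, f1, f3, Matrix.cons_val, Matrix.cons_val_zero,
    Matrix.cons_val_one, pairCR_zero_left, pairCR_zero_right]
  ring

/-- If `|(e,e)| ≤ 1/2` then for every `(s,r) ∈ ℝ²`: `Q(f₁,f₁) = 4 > 0`,
`Q(f₂,f₂) = Q(f₃,f₃) = 4 + (e,e) > 0`, and `Q(f₂,f₃) = Q(f₁,f₂) = Q(f₁,f₃) = 0`. -/
theorem statement9 (e : Fin 8 → ℝ) (he : |innE8R e e| ≤ 1 / 2) (s r : ℝ) :
    (QR (f1 s r) (f1 s r) = 4 ∧ 0 < QR (f1 s r) (f1 s r)) ∧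
    (QR (f2 e s r) (f2 e s r) = 4 + innE8R e e ∧ 0 < QR (f2 e s r) (f2 e s r)) ∧
    (QR (f3 e s r) (f3 e s r) = 4 + innE8R e e ∧ 0 < QR (f3 e s r) (f3 e s r)) ∧
    QR (f2 e s r) (f3 e s r) = 0 ∧ QR (f1 s r) (f2 e s r) = 0 ∧
    QR (f1 s r) (f3 e s r) = 0 := by
  have hpos : 0 < 4 + innE8R e e := by linarith [(abs_le.mp he).1]
  rw [QR_f1_self, QR_f2_self, QR_f3_self]
  exact ⟨⟨rfl, by norm_num⟩, ⟨rfl, hpos⟩, ⟨rfl, hpos⟩,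
    QR_f2_f3 e s r, QR_f1_f2 e s r, QR_f1_f3 e s r⟩
end

section
/- Assume the 45 real numbers 1, e_i (1 ≤ i ≤ 8), and e_i·e_j (1 ≤ i ≤ j ≤ 8) are linearly independent over ℚ. Then for every (s,r) ∈ ℝ² there is no d ∈ L with Q(d,d) = −2 and Q(d,f₁(s,r)) = Q(d,f₂(s,r)) = Q(d,f₃(s,r)) = 0. -/
open scoped BigOperators

open Matrix

/-!
Write `d = (w, p, q)` with `w = (w₀, …, w₅)` the coordinates along `u, v, x, y, z, t`.
The combination `w₁·Q(d,f₁) + w₂·Q(d,f₂) + w₄·Q(d,f₃)` eliminates `s` and `r` and leaves an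
integral relation between `1` and the `eⱼ`. Its constant term must vanish, which turns
`Q(d,d) = -2` into `4(w₁² + w₂² + w₄²) + pᵀCp + qᵀCq = 2`; as `C` is positive, `w₁ = w₂ = w₄ = 0`.
Then `Q(d,f₂) = 0` and `Q(d,f₃) = 0` are themselves integral relations, forcing `Cq = Cp = 0`,
and so `Q(d,d) = 0`.
-/

lemma linearIndependent_int_one_cons {e : Fin 8 → ℝ} (he : LinearIndependent ℚ (fam45 e)) :
    LinearIndependent ℤ fun o : Option (Fin 8) => o.elim 1 e := by
  have : LinearIndependent ℚ fun o : Option (Fin 8) => o.elim 1 e := by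
    convert he.comp (Option.map Sum.inl) (Option.map_injective Sum.inl_injective) using 1
    ext (_ | i) <;> rfl
  exact this.restrict_scalars' ℤ

lemma eq_zero_of_intCast_add_sum_eq_zero {ι : Type*} [Fintype ι] {v : ι → ℝ}
    (hv : LinearIndependent ℤ fun o : Option ι => o.elim 1 v) {m : ℤ} {n : ι → ℤ}
    (h : (m : ℝ) + ∑ j, (n j : ℝ) * v j = 0) : m = 0 ∧ n = 0 := by
  have := Fintype.linearIndependent_iff.mp hv (fun o => o.elim m n)
    (by simpa [Fintype.sum_option, zsmul_eq_mul] using h)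
  exact ⟨this none, funext fun j => this (some j)⟩

lemma pairCZ_eq_vecMul_dotProduct (q q' : Fin 8 → ℤ) : pairCZ q q' = (q ᵥ* E8Cartan) ⬝ᵥ q' := by
  simp only [pairCZ, dotProduct, vecMul, Finset.sum_mul]
  exact Finset.sum_comm

lemma pairCR_intCast_left (q : Fin 8 → ℤ) (w : Fin 8 → ℝ) :
    pairCR (fun i => (q i : ℝ)) w = ∑ j, ((q ᵥ* E8Cartan) j : ℝ) * w j := by
  simp only [pairCR, vecMul, dotProduct, Int.cast_sum, Int.cast_mul, Finset.sum_mul]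
  exact Finset.sum_comm

lemma pairCZ_self_nonneg (q : Fin 8 → ℤ) : 0 ≤ pairCZ q q := by
  have hexpand : pairCZ q q =
      2 * (q 0 ^ 2 + q 1 ^ 2 + q 2 ^ 2 + q 3 ^ 2 + q 4 ^ 2 + q 5 ^ 2 + q 6 ^ 2 + q 7 ^ 2)
      - 2 * (q 0 * q 2 + q 1 * q 3 + q 2 * q 3 + q 3 * q 4 + q 4 * q 5 + q 5 * q 6
        + q 6 * q 7) := by
    simp only [pairCZ, Fin.sum_univ_eight, E8Cartan, of_apply, cons_val]
    ring
  rw [hexpand]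
  -- the squares come from the LDLᵀ decomposition of the Cartan matrix
  nlinarith [sq_nonneg (2*q 0 - q 2), sq_nonneg (2*q 1 - q 3), sq_nonneg (3*q 2 - 2*q 3),
    sq_nonneg (5*q 3 - 6*q 4), sq_nonneg (4*q 4 - 5*q 5), sq_nonneg (3*q 5 - 4*q 6),
    sq_nonneg (2*q 6 - 3*q 7), sq_nonneg (q 7)]

lemma QZ_self (w : Fin 6 → ℤ) (p q : Fin 8 → ℤ) :
    QZ (w, p, q) (w, p, q) = 2 * (w 0 * w 1 + w 2 * w 3 + w 4 * w 5) - pairCZ p p - pairCZ q q := by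
  rw [QZ]; ring

lemma QR_incl_f1 (w : Fin 6 → ℤ) (p q : Fin 8 → ℤ) (s r : ℝ) :
    QR (incl (w, p, q)) (f1 s r) = w 0 + 2 * w 1 + s * w 2 + r * w 4 := by
  simp only [QR, incl, f1, pairCR, cons_val, Pi.zero_apply, mul_zero, Finset.sum_const_zero]
  ring

lemma QR_incl_f2 (e : Fin 8 → ℝ) (w : Fin 6 → ℤ) (p q : Fin 8 → ℤ) (s r : ℝ) :
    QR (incl (w, p, q)) (f2 e s r) =
      -s * w 1 + 2 * w 2 + w 3 - ∑ j, ((q ᵥ* E8Cartan) j : ℝ) * e j := by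
  simp only [QR, incl, f2, pairCR_intCast_left, cons_val, Pi.zero_apply, mul_zero,
    Finset.sum_const_zero]
  ring

lemma QR_incl_f3 (e : Fin 8 → ℝ) (w : Fin 6 → ℤ) (p q : Fin 8 → ℤ) (s r : ℝ) :
    QR (incl (w, p, q)) (f3 e s r) =
      -r * w 1 + 2 * w 4 + w 5 - ∑ j, ((p ᵥ* E8Cartan) j : ℝ) * e j := by
  simp only [QR, incl, f3, pairCR_intCast_left, cons_val, Pi.zero_apply, mul_zero,
    Finset.sum_const_zero]
  ring

/-- If the 45 numbers `1`, `eᵢ`, `eᵢ·eⱼ` are linearly independent over `ℚ`, then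
for every `(s,r) ∈ ℝ²` there is no `d ∈ L` with `Q(d,d) = −2` and
`Q(d,f₁(s,r)) = Q(d,f₂(s,r)) = Q(d,f₃(s,r)) = 0`. -/
theorem statement10 (e : Fin 8 → ℝ) (he : LinearIndependent ℚ (fam45 e)) (s r : ℝ) :
    ¬ ∃ d : LZ, QZ d d = -2 ∧ QR (incl d) (f1 s r) = 0 ∧
      QR (incl d) (f2 e s r) = 0 ∧ QR (incl d) (f3 e s r) = 0 := by
  rintro ⟨⟨w, p, q⟩, hdd, h1, h2, h3⟩
  rw [QR_incl_f1] at h1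
  rw [QR_incl_f2] at h2
  rw [QR_incl_f3] at h3
  rw [QZ_self] at hdd
  have hind := linearIndependent_int_one_cons he
  obtain ⟨hcomb, -⟩ := eq_zero_of_intCast_add_sum_eq_zero hind
    (m := w 0 * w 1 + 2 * w 1 ^ 2 + 2 * w 2 ^ 2 + w 2 * w 3 + 2 * w 4 ^ 2 + w 4 * w 5)
    (n := -(w 2 • (q ᵥ* E8Cartan) + w 4 • (p ᵥ* E8Cartan))) (by
      push_cast [Pi.neg_apply, Pi.add_apply, Pi.smul_apply, smul_eq_mul, neg_mul, add_mul,
        mul_assoc, Finset.sum_neg_distrib, Finset.sum_add_distrib, ← Finset.mul_sum]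
      linear_combination (w 1 : ℝ) * h1 + (w 2 : ℝ) * h2 + (w 4 : ℝ) * h3)
  have hp := pairCZ_self_nonneg p
  have hq := pairCZ_self_nonneg q
  have hsq : w 1 ^ 2 + w 2 ^ 2 + w 4 ^ 2 = 0 := by
    nlinarith [sq_nonneg (w 1), sq_nonneg (w 2), sq_nonneg (w 4)]
  have hw : w 1 = 0 ∧ w 2 = 0 ∧ w 4 = 0 := by
    refine ⟨?_, ?_, ?_⟩ <;> nlinarith [sq_nonneg (w 1), sq_nonneg (w 2), sq_nonneg (w 4)]
  obtain ⟨-, hqC⟩ := eq_zero_of_intCast_add_sum_eq_zero hind (m := w 3) (n := -(q ᵥ* E8Cartan))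
    (by simpa [hw, sub_eq_add_neg] using h2)
  obtain ⟨-, hpC⟩ := eq_zero_of_intCast_add_sum_eq_zero hind (m := w 5) (n := -(p ᵥ* E8Cartan))
    (by simpa [hw, sub_eq_add_neg] using h3)
  simp [hw, pairCZ_eq_vecMul_dotProduct, neg_eq_zero.mp hqC, neg_eq_zero.mp hpC] at hdd
end
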